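/- Let x be a node of a one-sided tree decomposition of the incidence graph of CNF φ with children y₁, y₂, let Φ be a principal CNF of x (the restriction of φ to variables of T_x after removing a set CL' ⊆ CL(x) of clauses and restricting by an assignment S to Var(par(x)) ∩ Var(x)), and let S' be an assignment to Var(x) \ Var(par(x)). If Φ|_{S'} is unsatisfiable, then either Φ|_{S'} contains the empty clause, or for some child y of x the y-component of Φ through S' is unsatisfiable. -/

import Mathlib

def postorder {α : Type} : Tree α → List α
  | BinaryTree.nil => []
  | BinaryTree.node a l r => postorder l ++ postorder r ++ [a]

inductive IsSubtree {α : Type} : Tree α → Tree α → Prop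
  | refl (t : Tree α) : IsSubtree t t
  | left {s l r : Tree α} {a : α} : IsSubtree s l → IsSubtree s (Tree.node a l r)
  | right {s l r : Tree α} {a : α} : IsSubtree s r → IsSubtree s (Tree.node a l r)

abbrev Lit : Type := ℕ × Bool
abbrev Clause : Type := Finset Lit
abbrev CNF : Type := Finset Clause

def satClause (a : ℕ → Bool) (C : Clause) : Prop := ∃ l ∈ C, a l.1 = l.2
def satCNF (a : ℕ → Bool) (φ : CNF) : Prop := ∀ C ∈ φ, satClause a C
def UnsatCNF (φ : CNF) : Prop := ¬ ∃ a : ℕ → Bool, satCNF a φ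
def varsC (C : Clause) : Finset ℕ := C.image Prod.fst
def varsCNF (φ : CNF) : Finset ℕ := φ.biUnion varsC
def WellFormed (S : Finset Lit) : Prop := ∀ x : ℕ, ¬((x, true) ∈ S ∧ (x, false) ∈ S)
def negLits (S : Finset Lit) : Finset Lit := S.image (fun l => (l.1, !l.2))
def restrictCNF (φ : CNF) (S : Finset Lit) : CNF :=
  (φ.filter (fun C => C ∩ S = ∅)).image (fun C => C \ negLits S)

abbrev IBag : Type := Finset ℕ × Finset Clause

def rootIB : Tree IBag → IBag
  | BinaryTree.nil => (∅, ∅)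
  | BinaryTree.node B _ _ => B

def occursVI (x : ℕ) (t : Tree IBag) : Prop := ∃ B ∈ postorder t, x ∈ B.1
def occursCI (C : Clause) (t : Tree IBag) : Prop := ∃ B ∈ postorder t, C ∈ B.2

def ConnInV (x : ℕ) : Tree IBag → Prop
  | BinaryTree.nil => True
  | BinaryTree.node B l r => ConnInV x l ∧ ConnInV x r ∧ (occursVI x l → occursVI x r → x ∈ B.1) ∧
      (x ∈ B.1 → occursVI x l → x ∈ (rootIB l).1) ∧ (x ∈ B.1 → occursVI x r → x ∈ (rootIB r).1)

def ConnInC (C : Clause) : Tree IBag → Prop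
  | BinaryTree.nil => True
  | BinaryTree.node B l r => ConnInC C l ∧ ConnInC C r ∧ (occursCI C l → occursCI C r → C ∈ B.2) ∧
      (C ∈ B.2 → occursCI C l → C ∈ (rootIB l).2) ∧ (C ∈ B.2 → occursCI C r → C ∈ (rootIB r).2)

/-- The bags containing clause `C` form a directed (root-to-descendant) path. -/
def ChainC (C : Clause) : Tree IBag → Prop
  | BinaryTree.nil => True
  | BinaryTree.node B l r => ¬(occursCI C l ∧ occursCI C r) ∧
      (C ∈ B.2 → (occursCI C l → C ∈ (rootIB l).2) ∧ (occursCI C r → C ∈ (rootIB r).2)) ∧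
      ChainC C l ∧ ChainC C r

def IsIncDecomp (φ : CNF) (t : Tree IBag) : Prop :=
  (∀ x ∈ varsCNF φ, occursVI x t) ∧ (∀ C ∈ φ, occursCI C t) ∧
  (∀ B ∈ postorder t, B.2 ⊆ φ) ∧
  (∀ C ∈ φ, ∀ x ∈ varsC C, ∃ B ∈ postorder t, x ∈ B.1 ∧ C ∈ B.2) ∧
  (∀ x : ℕ, ConnInV x t) ∧ (∀ C : Clause, ConnInC C t)

def treeVarsI : Tree IBag → Finset ℕ
  | BinaryTree.nil => ∅
  | BinaryTree.node B l r => B.1 ∪ treeVarsI l ∪ treeVarsI r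

def projC (C : Clause) (V : Finset ℕ) : Clause := C.filter (fun l => l.1 ∈ V)

def PhiX (φ CL' : CNF) (tx : Tree IBag) : CNF :=
  ((φ \ CL').filter (fun C => (varsC C ∩ treeVarsI tx).Nonempty)).image
    (fun C => projC C (treeVarsI tx))

def Principal (φ CL' : CNF) (tx : Tree IBag) (S : Finset Lit) : CNF :=
  restrictCNF (PhiX φ CL' tx) S

def AssignsExactly (S : Finset Lit) (V : Finset ℕ) : Prop :=
  WellFormed S ∧ S.image Prod.fst = V

def ParentedAt (t xt : Tree IBag) (Bp : IBag) : Prop :=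
  (xt = t ∧ Bp = (∅, ∅)) ∨
  ∃ (B' : IBag) (l r : Tree IBag),
    IsSubtree (Tree.node B' l r) t ∧ (xt = l ∨ xt = r) ∧ Bp = B'

def CLcomp (CL' : CNF) (SS : Finset Lit) (y : Tree IBag) : CNF :=
  (CL' ∩ (rootIB y).2) ∪ (rootIB y).2.filter (fun C => (C ∩ SS).Nonempty)

def Scomp (SS : Finset Lit) (B : IBag) (y : Tree IBag) : Finset Lit :=
  SS.filter (fun l => l.1 ∈ B.1 ∩ (rootIB y).1)

/-!
Glue satisfying assignments `a₁`, `a₂` of the two components: use `a₁` on `Var(T_{y₁})` and `a₂`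
elsewhere. A nonempty clause `D` of `Φ|_{S'}` has no variable in `B`, since `S ∪ S'` assigns all
of `B`; so it has a literal over `T_c` for a child `c`. The clause of `φ` behind `D` also yields
a clause of the `c`-component, and that clause is a subclause of `D`: connectivity puts every
variable of `B ∩ Var(T_c)` in the root bag of `c`, where the component is restricted exactly as
`Φ|_{S'}` is. The literal satisfied by `a_c` therefore lies in `D`, and its variable, being
outside `B`, does not occur in the other child, so the glued assignment agrees with `a_c` on it.
-/

theorem IsSubtree.trans {α : Type} {s u t : Tree α} (h₁ : IsSubtree s u) (h₂ : IsSubtree u t) :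
    IsSubtree s t := by
  induction h₂ with
  | refl => exact h₁
  | left _ ih => exact .left ih
  | right _ ih => exact .right ih

theorem ParentedAt.isSubtree {t xt : Tree IBag} {Bp : IBag} (h : ParentedAt t xt Bp) :
    IsSubtree xt t := by
  obtain ⟨rfl, -⟩ | ⟨B', l, r, hsub, rfl | rfl, -⟩ := h
  · exact .refl xt
  · exact (IsSubtree.left (.refl xt)).trans hsub
  · exact (IsSubtree.right (.refl xt)).trans hsub

theorem ConnInV.of_isSubtree {v : ℕ} {s t : Tree IBag} (h : IsSubtree s t) (hc : ConnInV v t) :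
    ConnInV v s := by
  induction h with
  | refl => exact hc
  | left _ ih => exact ih hc.1
  | right _ ih => exact ih hc.2.1

theorem mem_treeVarsI_iff_occursVI {v : ℕ} (t : Tree IBag) : v ∈ treeVarsI t ↔ occursVI v t := by
  induction t with
  | nil => simp [treeVarsI, occursVI, postorder]
  | node B l r ihl ihr =>
    simp only [occursVI] at ihl ihr
    simp only [treeVarsI, occursVI, postorder, Finset.mem_union, ihl, ihr, List.mem_append,
      List.mem_singleton, or_and_right, exists_or, exists_eq_left, or_assoc, or_comm]

theorem mem_negLits {S : Finset Lit} {l : Lit} : l ∈ negLits S ↔ (l.1, !l.2) ∈ S := by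
  constructor
  · intro h
    obtain ⟨m, hm, rfl⟩ := Finset.mem_image.1 h
    simpa using hm
  · exact fun h => Finset.mem_image.2 ⟨_, h, by simp⟩

theorem mem_restrictCNF {ψ : CNF} {S : Finset Lit} {D : Clause} :
    D ∈ restrictCNF ψ S ↔ ∃ C ∈ ψ, C ∩ S = ∅ ∧ C \ negLits S = D := by
  simp [restrictCNF, and_assoc]

theorem mem_PhiX {φ CL' : CNF} {tx : Tree IBag} {P : Clause} :
    P ∈ PhiX φ CL' tx ↔ ∃ C ∈ φ, C ∉ CL' ∧ (varsC C ∩ treeVarsI tx).Nonempty ∧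
      projC C (treeVarsI tx) = P := by
  simp [PhiX, and_assoc]

theorem restrictCNF_restrictCNF_subset {ψ : CNF} {S S' : Finset Lit}
    (h : Disjoint (S.image Prod.fst) (S'.image Prod.fst)) :
    restrictCNF (restrictCNF ψ S) S' ⊆ restrictCNF ψ (S ∪ S') := by
  intro D hD
  obtain ⟨Q, hQ, hQS', rfl⟩ := mem_restrictCNF.1 hD
  obtain ⟨C, hC, hCS, rfl⟩ := mem_restrictCNF.1 hQ
  have hCS' : C ∩ S' = ∅ := by
    refine Finset.eq_empty_of_forall_notMem fun l hl => ?_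
    obtain ⟨hlC, hlS'⟩ := Finset.mem_inter.1 hl
    by_cases hneg : l ∈ negLits S
    · have hlS : l.1 ∈ S.image Prod.fst := Finset.mem_image.2 ⟨_, mem_negLits.1 hneg, rfl⟩
      exact Finset.disjoint_left.1 h hlS (Finset.mem_image_of_mem Prod.fst hlS')
    · exact Finset.notMem_empty l
        (hQS' ▸ Finset.mem_inter.2 ⟨Finset.mem_sdiff.2 ⟨hlC, hneg⟩, hlS'⟩)
  refine mem_restrictCNF.2 ⟨C, hC, ?_, ?_⟩
  · rw [Finset.inter_union_distrib_left, hCS, hCS', Finset.union_empty]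
  · rw [negLits, Finset.image_union, ← negLits, ← negLits, sdiff_sdiff_left]
    rfl

theorem fst_notMem_image_of_mem_restrictCNF {ψ : CNF} {W : Finset Lit} {D : Clause} {l : Lit}
    (hD : D ∈ restrictCNF ψ W) (hl : l ∈ D) : l.1 ∉ W.image Prod.fst := by
  obtain ⟨C, -, hCW, rfl⟩ := mem_restrictCNF.1 hD
  rw [Finset.mem_sdiff, mem_negLits] at hl
  intro h
  obtain ⟨⟨v, b⟩, hm, rfl⟩ := Finset.mem_image.1 h
  rcases Bool.eq_or_eq_not b l.2 with rfl | rfl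
  · exact Finset.notMem_empty l (hCW ▸ Finset.mem_inter.2 ⟨hl.1, hm⟩)
  · exact hl.2 hm

theorem fst_mem_treeVarsI_of_mem_principal {φ CL' : CNF} {tx : Tree IBag} {S : Finset Lit}
    {D : Clause} {l : Lit} (hD : D ∈ Principal φ CL' tx S) (hl : l ∈ D) :
    l.1 ∈ treeVarsI tx := by
  obtain ⟨P, hP, -, rfl⟩ := mem_restrictCNF.1 hD
  obtain ⟨C, -, -, -, rfl⟩ := mem_PhiX.1 hP
  exact (Finset.mem_filter.1 (Finset.mem_sdiff.1 hl).1).2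

theorem exists_subset_mem_component {φ CL' : CNF} {tx c : Tree IBag} {B : IBag}
    {W : Finset Lit} {D : Clause} {l₀ : Lit}
    (hB : B.1 ⊆ treeVarsI tx) (hc : treeVarsI c ⊆ treeVarsI tx)
    (hroot : ∀ v ∈ B.1, v ∈ treeVarsI c → v ∈ (rootIB c).1) (hW : ∀ l ∈ W, l.1 ∈ B.1)
    (hD : D ∈ Principal φ CL' tx W) (hl₀ : l₀ ∈ D) (hl₀c : l₀.1 ∈ treeVarsI c) :
    ∃ D' ∈ Principal φ (CLcomp CL' W c) c (Scomp W B c), D' ⊆ D := by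
  obtain ⟨P, hP, hPW, rfl⟩ := mem_restrictCNF.1 hD
  obtain ⟨C, hCφ, hCCL, -, rfl⟩ := mem_PhiX.1 hP
  have hCW : C ∩ W = ∅ := by
    refine Finset.eq_empty_of_forall_notMem fun l hl => ?_
    obtain ⟨hlC, hlW⟩ := Finset.mem_inter.1 hl
    exact Finset.notMem_empty l
      (hPW ▸ Finset.mem_inter.2 ⟨Finset.mem_filter.2 ⟨hlC, hB (hW l hlW)⟩, hlW⟩)
  have hl₀C : l₀ ∈ C := (Finset.mem_filter.1 (Finset.mem_sdiff.1 hl₀).1).1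
  refine ⟨projC C (treeVarsI c) \ negLits (Scomp W B c), mem_restrictCNF.2 ⟨_, ?_, ?_, rfl⟩, ?_⟩
  · refine mem_PhiX.2 ⟨C, hCφ, ?_, ⟨l₀.1, ?_⟩, rfl⟩
    · simp only [CLcomp, Finset.mem_union, Finset.mem_inter, Finset.mem_filter, hCW,
        Finset.not_nonempty_empty]
      tauto
    · exact Finset.mem_inter.2 ⟨Finset.mem_image_of_mem Prod.fst hl₀C, hl₀c⟩
  · refine Finset.eq_empty_of_forall_notMem fun l hl => ?_
    obtain ⟨hlC, hlS⟩ := Finset.mem_inter.1 hl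
    exact Finset.notMem_empty l
      (hCW ▸ Finset.mem_inter.2 ⟨(Finset.mem_filter.1 hlC).1, (Finset.mem_filter.1 hlS).1⟩)
  · intro l hl
    obtain ⟨hlC, hlneg⟩ := Finset.mem_sdiff.1 hl
    obtain ⟨hlC, hlc⟩ := Finset.mem_filter.1 hlC
    refine Finset.mem_sdiff.2 ⟨Finset.mem_filter.2 ⟨hlC, hc hlc⟩, fun hneg => hlneg ?_⟩
    have hlW := mem_negLits.1 hneg
    have hlB : l.1 ∈ B.1 := hW (l.1, !l.2) hlW
    exact mem_negLits.2 (Finset.mem_filter.2 ⟨hlW, Finset.mem_inter.2 ⟨hlB, hroot _ hlB hlc⟩⟩)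

theorem satClause_of_satCNF_children {φ CL' : CNF} {B : IBag} {y₁ y₂ : Tree IBag}
    {W : Finset Lit} {a₁ a₂ : ℕ → Bool} (hconn : ∀ v, ConnInV v (.node B y₁ y₂))
    (hWB : W.image Prod.fst = B.1)
    (ha₁ : satCNF a₁ (Principal φ (CLcomp CL' W y₁) y₁ (Scomp W B y₁)))
    (ha₂ : satCNF a₂ (Principal φ (CLcomp CL' W y₂) y₂ (Scomp W B y₂)))
    {D : Clause} (hD : D ∈ Principal φ CL' (.node B y₁ y₂) W) (hne : D.Nonempty) :
    satClause (fun v => if v ∈ treeVarsI y₁ then a₁ v else a₂ v) D := by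
  simp only [ConnInV, ← mem_treeVarsI_iff_occursVI] at hconn
  have hshared v : v ∈ treeVarsI y₁ → v ∈ treeVarsI y₂ → v ∈ B.1 := (hconn v).2.2.1
  have hroot₁ v : v ∈ B.1 → v ∈ treeVarsI y₁ → v ∈ (rootIB y₁).1 := (hconn v).2.2.2.1
  have hroot₂ v : v ∈ B.1 → v ∈ treeVarsI y₂ → v ∈ (rootIB y₂).1 := (hconn v).2.2.2.2
  have hW : ∀ l ∈ W, l.1 ∈ B.1 := fun l hl => hWB ▸ Finset.mem_image_of_mem _ hl
  have hB : B.1 ⊆ treeVarsI (.node B y₁ y₂) :=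
    Finset.subset_union_left.trans Finset.subset_union_left
  have hnotB {l : Lit} (hl : l ∈ D) : l.1 ∉ B.1 :=
    hWB ▸ fst_notMem_image_of_mem_restrictCNF hD hl
  obtain ⟨l₀, hl₀⟩ := hne
  have hl₀y := fst_mem_treeVarsI_of_mem_principal hD hl₀
  simp only [treeVarsI, Finset.mem_union, hnotB hl₀, false_or] at hl₀y
  rcases hl₀y with hl₀y | hl₀y
  · obtain ⟨D', hD', hD'D⟩ := exists_subset_mem_component hB
      (Finset.subset_union_right.trans Finset.subset_union_left) hroot₁ hW hD hl₀ hl₀y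
    obtain ⟨l, hl, hla⟩ := ha₁ D' hD'
    exact ⟨l, hD'D hl, by simp only [if_pos (fst_mem_treeVarsI_of_mem_principal hD' hl), hla]⟩
  · obtain ⟨D', hD', hD'D⟩ := exists_subset_mem_component hB Finset.subset_union_right hroot₂ hW
      hD hl₀ hl₀y
    obtain ⟨l, hl, hla⟩ := ha₂ D' hD'
    have hly : l.1 ∉ treeVarsI y₁ := fun h =>
      hnotB (hD'D hl) (hshared l.1 h (fst_mem_treeVarsI_of_mem_principal hD' hl))
    exact ⟨l, hD'D hl, by simp only [if_neg hly, hla]⟩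

theorem stmt12_general (φ : CNF) (t : Tree IBag)
    (hdec : IsIncDecomp φ t)
    (Bp B : IBag) (y₁ y₂ : Tree IBag)
    (hx : ParentedAt t (Tree.node B y₁ y₂) Bp)
    (CL' : CNF)
    (S : Finset Lit) (hS : AssignsExactly S (Bp.1 ∩ B.1))
    (S' : Finset Lit) (hS' : AssignsExactly S' (B.1 \ Bp.1))
    (hunsat : UnsatCNF (restrictCNF (Principal φ CL' (Tree.node B y₁ y₂) S) S')) :
    (∅ : Clause) ∈ restrictCNF (Principal φ CL' (Tree.node B y₁ y₂) S) S' ∨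
    UnsatCNF (Principal φ (CLcomp CL' (S ∪ S') y₁) y₁ (Scomp (S ∪ S') B y₁)) ∨
    UnsatCNF (Principal φ (CLcomp CL' (S ∪ S') y₂) y₂ (Scomp (S ∪ S') B y₂)) := by
  by_contra! h
  simp only [UnsatCNF, not_not] at h
  obtain ⟨hempty, ⟨a₁, ha₁⟩, ⟨a₂, ha₂⟩⟩ := h
  have hconn v : ConnInV v (.node B y₁ y₂) := (hdec.2.2.2.2.1 v).of_isSubtree hx.isSubtree
  have hWB : (S ∪ S').image Prod.fst = B.1 := by
    rw [Finset.image_union, hS.2, hS'.2, Finset.union_comm, Finset.inter_comm,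
      Finset.sdiff_union_inter]
  have hdisj : Disjoint (S.image Prod.fst) (S'.image Prod.fst) := by
    rw [hS.2, hS'.2]
    exact Finset.disjoint_sdiff.mono_left Finset.inter_subset_left
  refine hunsat ⟨_, fun D hD => satClause_of_satCNF_children hconn hWB ha₁ ha₂
    (restrictCNF_restrictCNF_subset hdisj hD) (Finset.nonempty_iff_ne_empty.2 ?_)⟩
  rintro rfl
  exact hempty hD

theorem stmt12 (φ : CNF) (t : Tree IBag)
    (hdec : IsIncDecomp φ t) (hos : ∀ C ∈ φ, ChainC C t)
    (Bp B : IBag) (y₁ y₂ : Tree IBag)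
    (hx : ParentedAt t (Tree.node B y₁ y₂) Bp)
    (CL' : CNF) (hCL : CL' ⊆ B.2)
    (S : Finset Lit) (hS : AssignsExactly S (Bp.1 ∩ B.1))
    (S' : Finset Lit) (hS' : AssignsExactly S' (B.1 \ Bp.1))
    (hunsat : UnsatCNF (restrictCNF (Principal φ CL' (Tree.node B y₁ y₂) S) S')) :
    (∅ : Clause) ∈ restrictCNF (Principal φ CL' (Tree.node B y₁ y₂) S) S' ∨
    UnsatCNF (Principal φ (CLcomp CL' (S ∪ S') y₁) y₁ (Scomp (S ∪ S') B y₁)) ∨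
    UnsatCNF (Principal φ (CLcomp CL' (S ∪ S') y₂) y₂ (Scomp (S ∪ S') B y₂)) :=
  stmt12_general φ t hdec Bp B y₁ y₂ hx CL' S hS S' hS' hunsat
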